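/- There exists a graph H with domatic number 3 such that in every partition of its vertex set into three dominating sets D₁, D₂, D₃, each part has cardinality strictly greater than the domination number γ(H). -/

import Mathlib

/-- `D` is a dominating set of `G`. -/
def IsDomSet {V : Type*} (G : SimpleGraph V) (D : Set V) : Prop :=
  ∀ v : V, v ∈ D ∨ ∃ u ∈ D, G.Adj u v

/-- The domatic number: the largest `k` such that the vertex set can be
partitioned into `k` dominating sets. -/
noncomputable def domaticNumber {V : Type*} [Fintype V] (G : SimpleGraph V) : ℕ :=
  sSup {k | ∃ f : V → Fin k, ∀ i : Fin k, IsDomSet G (f ⁻¹' {i})}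

/-- The domination number: the minimum size of a dominating set. -/
noncomputable def dominationNumber {V : Type*} [Fintype V] (G : SimpleGraph V) : ℕ :=
  sInf {k | ∃ D : Finset V, IsDomSet G ↑D ∧ D.card = k}

/-!
Vertex 8 of the nine-vertex graph below has closed neighbourhood `{0, 4, 8}`. Every dominating
set meets it, so the domatic number is at most 3, and in a partition into three dominating sets
the vertices 0 and 4 lie in different parts. On the other hand `{0, 4}` is the only dominating set
with at most two vertices, so the domination number is 2 while every part of such a partition has
at least three vertices.
-/

open Finset

instance IsDomSet.decidable {V : Type*} [Fintype V] [DecidableEq V] (G : SimpleGraph V)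
    [DecidableRel G.Adj] (D : Finset V) : Decidable (IsDomSet G D) :=
  inferInstanceAs (Decidable (∀ v, v ∈ D ∨ ∃ u ∈ D, G.Adj u v))

lemma dominationNumber_le_card {V : Type*} [Fintype V] {G : SimpleGraph V} {D : Finset V}
    (hD : IsDomSet G D) : dominationNumber G ≤ #D :=
  Nat.sInf_le ⟨D, hD, rfl⟩

section ClosedNeighborhood

variable {V : Type*} [Fintype V] [DecidableEq V] (G : SimpleGraph V) [DecidableRel G.Adj]

def closedNeighborFinset (v : V) : Finset V := insert v (G.neighborFinset v)

variable {G}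

lemma mem_closedNeighborFinset {u v : V} : u ∈ closedNeighborFinset G v ↔ u = v ∨ G.Adj u v := by
  simp [closedNeighborFinset, G.adj_comm]

lemma IsDomSet.exists_mem_closedNeighborFinset {D : Set V} (hD : IsDomSet G D) (v : V) :
    ∃ u ∈ D, u ∈ closedNeighborFinset G v := by
  rcases hD v with hv | ⟨u, hu, huv⟩
  · exact ⟨v, hv, mem_closedNeighborFinset.2 (Or.inl rfl)⟩
  · exact ⟨u, hu, mem_closedNeighborFinset.2 (Or.inr huv)⟩

variable {k : ℕ} {f : V → Fin k}

lemma surjOn_closedNeighborFinset (hf : ∀ i, IsDomSet G (f ⁻¹' {i})) (v : V) :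
    Set.SurjOn f (closedNeighborFinset G v) (univ : Finset (Fin k)) := fun i _ => by
  obtain ⟨u, hu, huv⟩ := (hf i).exists_mem_closedNeighborFinset v
  exact ⟨u, huv, hu⟩

lemma le_card_closedNeighborFinset (hf : ∀ i, IsDomSet G (f ⁻¹' {i})) (v : V) :
    k ≤ #(closedNeighborFinset G v) := by
  simpa using card_le_card_of_surjOn f (surjOn_closedNeighborFinset hf v)

lemma injOn_closedNeighborFinset (hf : ∀ i, IsDomSet G (f ⁻¹' {i})) {v : V}
    (hv : #(closedNeighborFinset G v) = k) : Set.InjOn f (closedNeighborFinset G v) :=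
  injOn_of_surjOn_of_card_le f (fun _ _ => mem_coe.2 (mem_univ _))
    (surjOn_closedNeighborFinset hf v) (by simp [hv])

variable (G) in
lemma domaticNumber_le_card_closedNeighborFinset (v : V) :
    domaticNumber G ≤ #(closedNeighborFinset G v) :=
  csSup_le' fun _ ⟨_, hf⟩ => le_card_closedNeighborFinset hf v

end ClosedNeighborhood

lemma le_domaticNumber {V : Type*} [Fintype V] [Nonempty V] {G : SimpleGraph V} {k : ℕ}
    {f : V → Fin k} (hf : ∀ i, IsDomSet G (f ⁻¹' {i})) : k ≤ domaticNumber G := by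
  classical
  exact le_csSup ⟨_, fun _ ⟨_, hg⟩ => le_card_closedNeighborFinset hg (Classical.arbitrary V)⟩
    ⟨f, hf⟩

def exampleEdges : List (Fin 9 × Fin 9) :=
  [(0, 1), (0, 2), (0, 3), (0, 4), (0, 7), (0, 8), (1, 2), (1, 6), (3, 6), (3, 7), (4, 5),
    (4, 6), (4, 8), (5, 7)]

def exampleGraph : SimpleGraph (Fin 9) := SimpleGraph.fromRel fun a b => (a, b) ∈ exampleEdges

instance : DecidableRel exampleGraph.Adj := fun a b =>
  inferInstanceAs (Decidable (a ≠ b ∧ ((a, b) ∈ exampleEdges ∨ (b, a) ∈ exampleEdges)))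

lemma card_closedNeighborFinset_eight : #(closedNeighborFinset exampleGraph 8) = 3 := by decide

def exampleColoring : Fin 9 → Fin 3 := ![0, 1, 2, 2, 2, 0, 0, 1, 1]

lemma isDomSet_exampleColoring (i : Fin 3) : IsDomSet exampleGraph (exampleColoring ⁻¹' {i}) := by
  have h : ∀ i : Fin 3, IsDomSet exampleGraph (univ.filter (exampleColoring · = i) : Finset _) := by
    decide
  simp only [coe_filter_univ] at h
  exact h i

lemma isDomSet_zero_four : IsDomSet exampleGraph ({0, 4} : Finset (Fin 9)) := by decide

lemma zero_mem_and_four_mem_of_isDomSet {D : Finset (Fin 9)} (hD : IsDomSet exampleGraph D)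
    (hcard : #D ≤ 2) : 0 ∈ D ∧ 4 ∈ D := by
  have h : ∀ D : Finset (Fin 9), IsDomSet exampleGraph D → #D ≤ 2 → 0 ∈ D ∧ 4 ∈ D := by
    decide +kernel
  exact h D hD hcard

lemma domaticNumber_exampleGraph : domaticNumber exampleGraph = 3 :=
  le_antisymm
    (card_closedNeighborFinset_eight ▸ domaticNumber_le_card_closedNeighborFinset exampleGraph 8)
    (le_domaticNumber isDomSet_exampleColoring)

theorem exists_graph_all_three_partitions_parts_large :
    ∃ (n : ℕ) (H : SimpleGraph (Fin n)),
      domaticNumber H = 3 ∧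
      ∀ f : Fin n → Fin 3, (∀ i : Fin 3, IsDomSet H (f ⁻¹' {i})) →
        ∀ i : Fin 3, dominationNumber H < (f ⁻¹' {i}).ncard := by
  refine ⟨9, exampleGraph, domaticNumber_exampleGraph, fun f hf i => ?_⟩
  have hpart : f ⁻¹' {i} = ↑(univ.filter (f · = i)) := (coe_filter_univ _).symm
  rw [hpart, Set.ncard_coe_finset]
  refine (dominationNumber_le_card isDomSet_zero_four).trans_lt (lt_of_not_ge fun hsmall => ?_)
  obtain ⟨h0, h4⟩ := zero_mem_and_four_mem_of_isDomSet (hpart ▸ hf i) hsmall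
  have h04 : f 0 = f 4 := by rw [(mem_filter.1 h0).2, (mem_filter.1 h4).2]
  have h0_eq_4 : (0 : Fin 9) = 4 :=
    injOn_closedNeighborFinset hf card_closedNeighborFinset_eight (by decide) (by decide) h04
  exact absurd h0_eq_4 (by decide)
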